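/- Let p be an odd prime and let n ≥ 1 be an integer. Let (a_k)_{k≥0} be a sequence in ℚ_p such that ‖k · a_k‖_p ≤ 1 for every k ≥ 1 (i.e. the formal derivative ∑_{k≥1} k a_k t^{k-1} of the power series F(t) = ∑_{k≥0} a_k t^k has ℤ_p-coefficients). Suppose x, y ∈ ℚ_p are distinct points with ‖x‖_p ≤ p^{-n} and ‖y‖_p ≤ p^{-n}, and that there is some s ∈ ℚ_p such that ∑_{k≥0} a_k x^k and ∑_{k≥0} a_k y^k both converge with the same sum s. Then the derivative series ∑_{k≥1} k a_k x^{k-1} converges and ‖∑_{k≥1} k a_k x^{k-1}‖_p ≤ p^{-n}. -/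

import Mathlib

/-!
Put `h = y - x`. Since `F(x + h) = F(x)`, the value `d` of the derivative series satisfies
`d * h = -∑ a_k ((x + h)^k - x^k - k x^(k-1) h)`. Each remainder is
`∑_{i ≥ 2} C(k,i) x^(k-i) h^i`, and `i * C(k,i) = k * C(k-1,i-1)` bounds its norm by
`‖k‖ * ‖h‖^i / ‖i‖ ≤ ‖k‖ * ‖h‖^2`, because `‖i‖ ≥ p^(-(i-2))` for odd `p`.
Hence `‖d‖ * ‖h‖ ≤ ‖h‖^2`, i.e. `‖d‖ ≤ ‖y - x‖ ≤ p^(-n)`.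
-/

lemma padicValNat_add_two_le {p : ℕ} (hp : 3 ≤ p) (m : ℕ) : padicValNat p (m + 2) ≤ m := by
  have hlt : m + 2 < 3 ^ (m + 1) := by
    induction m with
    | zero => norm_num
    | succ k ih => rw [pow_succ]; omega
  calc padicValNat p (m + 2) ≤ Nat.log p (m + 2) := padicValNat_le_nat_log _
    _ ≤ Nat.log 3 (m + 2) := Nat.log_anti_left (by norm_num) hp
    _ ≤ m := Nat.lt_succ_iff.mp (Nat.log_lt_of_lt_pow (by omega) hlt)

lemma add_pow_sub_sub_eq_sum {R : Type*} [CommRing R] (x h : R) (j : ℕ) :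
    (x + h) ^ (j + 1) - x ^ (j + 1) - ((j + 1 : ℕ) : R) * x ^ j * h =
      ∑ m ∈ Finset.range j,
        h ^ (m + 2) * x ^ (j + 1 - (m + 2)) * ((j + 1).choose (m + 2) : R) := by
  rw [add_comm x h, add_pow, Finset.sum_range_succ', Finset.sum_range_succ']
  simp only [Nat.reduceSubDiff, zero_add, pow_one, add_tsub_cancel_right, Nat.choose_one_right,
    Nat.cast_add, Nat.cast_one, pow_zero, tsub_zero, one_mul, Nat.choose_zero_right, mul_one,
    add_sub_cancel_right]
  ring

namespace Padic

variable {p : ℕ} [Fact p.Prime]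

lemma inv_pow_le_norm_natCast_add_two (hp : Odd p) (m : ℕ) :
    (p : ℝ)⁻¹ ^ m ≤ ‖((m + 2 : ℕ) : ℚ_[p])‖ := by
  have hp3 : 3 ≤ p := by
    obtain ⟨k, rfl⟩ := hp
    have := (Fact.out : (2 * k + 1).Prime).two_le
    omega
  have hp1 : (1 : ℝ) ≤ p := mod_cast (Fact.out : p.Prime).one_le
  rw [norm_eq_zpow_neg_valuation (Nat.cast_ne_zero.mpr (by omega)), valuation_natCast,
    inv_pow, ← zpow_natCast, ← zpow_neg]
  exact zpow_le_zpow_right₀ hp1 (neg_le_neg (mod_cast padicValNat_add_two_le hp3 m))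

lemma norm_pow_add_two_le (hp : Odd p) {h : ℚ_[p]} (hh : ‖h‖ ≤ (p : ℝ)⁻¹) (m : ℕ) :
    ‖h‖ ^ (m + 2) ≤ ‖h‖ ^ 2 * ‖((m + 2 : ℕ) : ℚ_[p])‖ :=
  calc ‖h‖ ^ (m + 2) = ‖h‖ ^ 2 * ‖h‖ ^ m := by ring
    _ ≤ ‖h‖ ^ 2 * (p : ℝ)⁻¹ ^ m := by gcongr
    _ ≤ ‖h‖ ^ 2 * ‖((m + 2 : ℕ) : ℚ_[p])‖ := by
      gcongr; exact inv_pow_le_norm_natCast_add_two hp m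

lemma norm_choose_mul_norm_le (k i : ℕ) :
    ‖(k.choose i : ℚ_[p])‖ * ‖(i : ℚ_[p])‖ ≤ ‖(k : ℚ_[p])‖ := by
  rcases i with _ | i
  · simp
  rcases k with _ | k
  · simp
  rw [← norm_mul, ← Nat.cast_mul, ← Nat.add_one_mul_choose_eq, Nat.cast_mul, norm_mul]
  exact mul_le_of_le_one_right (norm_nonneg _) (IsUltrametricDist.norm_natCast_le_one _ _)

lemma norm_add_pow_sub_sub_le (hp : Odd p) {x h : ℚ_[p]} (hx : ‖x‖ ≤ 1)
    (hh : ‖h‖ ≤ (p : ℝ)⁻¹) (j : ℕ) :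
    ‖(x + h) ^ (j + 1) - x ^ (j + 1) - ((j + 1 : ℕ) : ℚ_[p]) * x ^ j * h‖ ≤
      ‖((j + 1 : ℕ) : ℚ_[p])‖ * ‖h‖ ^ 2 := by
  rw [add_pow_sub_sub_eq_sum]
  refine IsUltrametricDist.norm_sum_le_of_forall_le_of_nonneg (by positivity) fun m _ => ?_
  calc ‖h ^ (m + 2) * x ^ (j + 1 - (m + 2)) * ((j + 1).choose (m + 2) : ℚ_[p])‖
      ≤ ‖h‖ ^ (m + 2) * ‖((j + 1).choose (m + 2) : ℚ_[p])‖ := by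
        rw [norm_mul, norm_mul, norm_pow, norm_pow]
        gcongr
        exact mul_le_of_le_one_right (by positivity) (pow_le_one₀ (norm_nonneg x) hx)
    _ ≤ ‖h‖ ^ 2 * ‖((m + 2 : ℕ) : ℚ_[p])‖ * ‖((j + 1).choose (m + 2) : ℚ_[p])‖ := by
        gcongr; exact norm_pow_add_two_le hp hh m
    _ ≤ ‖((j + 1 : ℕ) : ℚ_[p])‖ * ‖h‖ ^ 2 := by
        rw [mul_assoc, mul_comm, mul_comm ‖((m + 2 : ℕ) : ℚ_[p])‖]
        gcongr
        exact norm_choose_mul_norm_le _ _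

theorem norm_le_of_hasSum_add_eq (hp : Odd p) {a : ℕ → ℚ_[p]}
    (ha : ∀ k : ℕ, ‖((k + 1 : ℕ) : ℚ_[p]) * a (k + 1)‖ ≤ 1) {x h s d : ℚ_[p]} (hh0 : h ≠ 0)
    (hx : ‖x‖ ≤ 1) (hh : ‖h‖ ≤ (p : ℝ)⁻¹)
    (hsx : HasSum (fun k : ℕ => a k * x ^ k) s)
    (hsxh : HasSum (fun k : ℕ => a k * (x + h) ^ k) s)
    (hd : HasSum (fun k : ℕ => ((k + 1 : ℕ) : ℚ_[p]) * a (k + 1) * x ^ k) d) :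
    ‖d‖ ≤ ‖h‖ := by
  have hdiff :
      HasSum (fun k : ℕ => a (k + 1) * (x + h) ^ (k + 1) - a (k + 1) * x ^ (k + 1)) 0 := by
    simpa using (hasSum_nat_add_iff' 1).mpr (hsxh.sub hsx)
  have hrem : HasSum (fun k : ℕ => a (k + 1) *
      ((x + h) ^ (k + 1) - x ^ (k + 1) - ((k + 1 : ℕ) : ℚ_[p]) * x ^ k * h)) (-(d * h)) := by
    rw [← zero_sub]
    exact (hdiff.sub (hd.mul_right h)).congr_fun fun k => by ring
  have hdh : ‖d‖ * ‖h‖ ≤ ‖h‖ * ‖h‖ := by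
    rw [← norm_mul, ← norm_neg, ← hrem.tsum_eq, ← sq]
    refine IsUltrametricDist.norm_tsum_le_of_forall_le_of_nonneg (by positivity) fun k => ?_
    calc ‖a (k + 1) * ((x + h) ^ (k + 1) - x ^ (k + 1) - ((k + 1 : ℕ) : ℚ_[p]) * x ^ k * h)‖
        ≤ ‖a (k + 1)‖ * (‖((k + 1 : ℕ) : ℚ_[p])‖ * ‖h‖ ^ 2) := by
          rw [norm_mul]; gcongr; exact norm_add_pow_sub_sub_le hp hx hh k
      _ ≤ ‖h‖ ^ 2 := by
          rw [← mul_assoc, mul_comm ‖a (k + 1)‖, ← norm_mul]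
          exact mul_le_of_le_one_left (by positivity) (ha k)
  exact le_of_mul_le_mul_right hdh (norm_pos_iff.mpr hh0)

end Padic

/-- Lemma 3.2 of the paper in the case `m = 0` (odd prime).
If the formal derivative of `F(t) = ∑_{k≥0} a_k t^k` has `ℤ_p`-coefficients and `F`
takes the same value at two distinct points `x ≠ y` of norm at most `p^{-n}`, then the
derivative series `∑_{k≥1} k a_k x^{k-1}` converges to a value of norm at most `p^{-n}`. -/
theorem stmt_2 (p : ℕ) [Fact p.Prime] (hodd : Odd p) (n : ℕ) (hn : 1 ≤ n)
    (a : ℕ → ℚ_[p])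
    (hint : ∀ k : ℕ, 1 ≤ k → ‖(k : ℚ_[p]) * a k‖ ≤ 1)
    (x y : ℚ_[p]) (hxy : x ≠ y)
    (hx : ‖x‖ ≤ (p : ℝ) ^ (-(n : ℤ))) (hy : ‖y‖ ≤ (p : ℝ) ^ (-(n : ℤ)))
    (s : ℚ_[p])
    (hsx : HasSum (fun k : ℕ => a k * x ^ k) s)
    (hsy : HasSum (fun k : ℕ => a k * y ^ k) s) :
    ∃ d : ℚ_[p],
      HasSum (fun k : ℕ => ((k + 1 : ℕ) : ℚ_[p]) * a (k + 1) * x ^ k) d ∧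
      ‖d‖ ≤ (p : ℝ) ^ (-(n : ℤ)) := by
  have hr : (p : ℝ) ^ (-(n : ℤ)) ≤ (p : ℝ)⁻¹ := by
    rw [← zpow_neg_one]
    exact zpow_le_zpow_right₀ (mod_cast (Fact.out : p.Prime).one_le) (by omega)
  have hx1 : ‖x‖ < 1 :=
    (hx.trans hr).trans_lt (inv_lt_one_of_one_lt₀ (mod_cast (Fact.out : p.Prime).one_lt))
  have ha (k : ℕ) : ‖((k + 1 : ℕ) : ℚ_[p]) * a (k + 1)‖ ≤ 1 := hint (k + 1) k.succ_pos
  obtain ⟨d, hd⟩ : Summable fun k : ℕ => ((k + 1 : ℕ) : ℚ_[p]) * a (k + 1) * x ^ k := by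
    refine .of_norm_bounded (summable_geometric_of_lt_one (norm_nonneg x) hx1) fun k => ?_
    rw [norm_mul, norm_pow]
    exact mul_le_of_le_one_left (by positivity) (ha k)
  have hyx : ‖y - x‖ ≤ (p : ℝ) ^ (-(n : ℤ)) := by
    simpa only [← sub_eq_add_neg, norm_neg] using
      (IsUltrametricDist.norm_add_le_max y (-x)).trans
        (max_le hy ((norm_neg x).trans_le hx))
  refine ⟨d, hd, le_trans ?_ hyx⟩
  refine Padic.norm_le_of_hasSum_add_eq hodd ha (sub_ne_zero.mpr hxy.symm) hx1.le
    (hyx.trans hr) hsx ?_ hd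
  rwa [add_sub_cancel]
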